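/- arXiv:2005.04825 — 2 statements merged into one kernel-verified Lean document; each statement's English description precedes it below -/
import Mathlib

section
/- Let z₀, z₁, z₂ be nonzero complex numbers with z₀z₁z₂ = 1, and set u₁ = z₂ + z₀, u₂ = z₀ + z₁, u₃ = z₁ + z₂. Then (u₁³ + u₂³ + u₃³) + 2u₁u₂u₃ − (u₁²u₂ + u₁u₂² + u₂²u₃ + u₂u₃² + u₃²u₁ + u₃u₁²) + 8 = 0; i.e. the functions u₁, u₂, u₃ satisfy this explicit cubic relation. -/
/-- For nonzero complex numbers `z₀, z₁, z₂` with `z₀z₁z₂ = 1` and `u₁ = z₂ + z₀`,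
`u₂ = z₀ + z₁`, `u₃ = z₁ + z₂`, the cubic relation
`(u₁³ + u₂³ + u₃³) + 2u₁u₂u₃ − (u₁²u₂ + u₁u₂² + u₂²u₃ + u₂u₃² + u₃²u₁ + u₃u₁²) + 8 = 0`
holds. -/
theorem stmt11 (z₀ z₁ z₂ : ℂ) (h₀ : z₀ ≠ 0) (h₁ : z₁ ≠ 0) (h₂ : z₂ ≠ 0)
    (h : z₀ * z₁ * z₂ = 1) :
    (z₂ + z₀) ^ 3 + (z₀ + z₁) ^ 3 + (z₁ + z₂) ^ 3
      + 2 * (z₂ + z₀) * (z₀ + z₁) * (z₁ + z₂)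
      - ((z₂ + z₀) ^ 2 * (z₀ + z₁) + (z₂ + z₀) * (z₀ + z₁) ^ 2
        + (z₀ + z₁) ^ 2 * (z₁ + z₂) + (z₀ + z₁) * (z₁ + z₂) ^ 2
        + (z₁ + z₂) ^ 2 * (z₂ + z₀) + (z₁ + z₂) * (z₂ + z₀) ^ 2)
      + 8 = 0 := by
  linear_combination (-8 : ℂ) * h
end

section
/- For every real q ≤ 0 and every real r > 0, the complex number i / ( r · ((q − ir)² + 4i/r)^{1/2} ) has strictly positive imaginary part, where (·)^{1/2} denotes the principal square root. (This is the pointwise sign of the integrand i·(dt₁/t₁)/√((q−t₁)²−4/t₁) on the contour t₁ = ir, which forces the imaginary part of the thimble integral G(q) to be monotone in q.) -/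
open Complex

lemma sqrt_re_pos_of_im_pos {z : ℂ} (hz : 0 < z.im) : 0 < (z ^ (1 / 2 : ℂ)).re := by
  have hz0 : z ≠ 0 := by
    intro h; rw [h] at hz; simp at hz
  rw [Complex.cpow_def_of_ne_zero hz0, Complex.exp_re]
  have him : (Complex.log z * (1 / 2 : ℂ)).im = z.arg / 2 := by
    simp [Complex.log_im]
    ring
  rw [him]
  have harg_nonneg : 0 ≤ z.arg := Complex.arg_nonneg_iff.mpr hz.le
  have harg_lt : z.arg < Real.pi := by
    rw [Complex.arg_lt_pi_iff]
    exact Or.inr hz.ne'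
  have hcos : 0 < Real.cos (z.arg / 2) := by
    apply Real.cos_pos_of_mem_Ioo
    constructor
    · linarith [Real.pi_pos]
    · linarith
  positivity

/-- For real `q ≤ 0` and real `r > 0`, the complex number
`i / (r · ((q − ir)² + 4i/r)^(1/2))` has strictly positive imaginary part, where `(·)^(1/2)`
is the principal square root: this is the pointwise sign of the integrand
`i·(dt₁/t₁)/√((q−t₁)²−4/t₁)` on the contour `t₁ = ir`. -/
theorem stmt17 (q r : ℝ) (hq : q ≤ 0) (hr : 0 < r) :
    0 < (Complex.I /
        ((r : ℂ) * (((q : ℂ) - Complex.I * r) ^ 2 + 4 * Complex.I / r) ^ (1 / 2 : ℂ))).im := by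
  set z : ℂ := ((q : ℂ) - Complex.I * r) ^ 2 + 4 * Complex.I / r with hz
  have hzim : 0 < z.im := by
    have : z.im = -2 * q * r + 4 / r := by
      simp [hz, Complex.div_im, Complex.normSq, pow_two]
      field_simp
      ring
    rw [this]
    have h1 : 0 ≤ -2 * q * r := by nlinarith
    have h2 : 0 < 4 / r := by positivity
    linarith
  have hre : 0 < (z ^ (1 / 2 : ℂ)).re := sqrt_re_pos_of_im_pos hzim
  set w : ℂ := z ^ (1 / 2 : ℂ)
  have hw0 : w ≠ 0 := by
    intro h
    rw [h] at hre; simp at hre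
  have hns : 0 < Complex.normSq ((r : ℂ) * w) := by
    apply Complex.normSq_pos.mpr
    simp [hw0, hr.ne']
  rw [Complex.div_im]
  have h1 : ((r : ℂ) * w).re = r * w.re := by simp [Complex.mul_re]
  have h2 : Complex.I.im = 1 := Complex.I_im
  have h3 : Complex.I.re = 0 := Complex.I_re
  rw [h1, h2, h3]
  simp only [zero_mul, zero_div, sub_zero, one_mul]
  positivity
end
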